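/- arXiv:0706.2439 — 5 statements merged into one kernel-verified Lean document; each statement's English description precedes it below -/
import Mathlib

section
/- In an amalgamated free product G *_C H, if n ≥ 2 and (w_1, ..., w_n) and (v_1, ..., v_n) are cyclically reduced sequences whose products are conjugate in G *_C H, then there exists k ∈ {0, 1, ..., n-1} and elements c_1, ..., c_n of C such that w_i = c_{i+k-1}^{-1} v_{i+k} c_{i+k} for all i (indices mod n). In particular, w_i and v_{i+k} lie in the same factor (both in G or both in H). -/
/-!
Abstract model of an amalgamated free product `G *_C H`:
a group `K` with subgroups `G`, `H` and `C = G ⊓ H`, generated by `G ⊔ H`,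
in which the normal form theorem (the product of a nonempty reduced
sequence is not the identity) holds.
-/

namespace AmalgamStmt

variable {K : Type*} [Group K]

/-- The product `w 0 * w 1 * ⋯ * w (n-1)` of a finite sequence. -/
def seqProd {n : ℕ} (w : Fin n → K) : K := (List.ofFn w).prod

/-- A finite sequence is *reduced* (w.r.t. the factors `G` and `H`) if every term lies
in `G` or `H`, consecutive terms do not lie in a common factor, and a sequence of
length one does not consist of the identity. -/
def Reduced (G H : Subgroup K) {n : ℕ} (w : Fin n → K) : Prop :=
  (∀ i, w i ∈ G ∨ w i ∈ H) ∧
  (∀ i : ℕ, ∀ h : i + 1 < n,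
    ¬(w ⟨i, by omega⟩ ∈ G ∧ w ⟨i + 1, h⟩ ∈ G) ∧
    ¬(w ⟨i, by omega⟩ ∈ H ∧ w ⟨i + 1, h⟩ ∈ H)) ∧
  (n = 1 → ∀ i, w i ≠ 1)

/-- A sequence is *cyclically reduced* if all of its cyclic permutations are reduced. -/
def CyclicallyReduced (G H : Subgroup K) {n : ℕ} (w : Fin n → K) : Prop :=
  ∀ k : ℕ, Reduced G H (fun i : Fin n => w ⟨((i : ℕ) + k) % n, Nat.mod_lt _ i.pos⟩)

/-- Britton's normal form property: the product of a nonempty reduced sequence is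
not the identity. -/
def NormalFormProperty (G H : Subgroup K) : Prop :=
  ∀ (n : ℕ) (w : Fin n → K), 0 < n → Reduced G H w → seqProd w ≠ 1

/-- The double coset `C x C`. -/
def doubleCoset (C : Subgroup K) (x : K) : Set K :=
  {y | ∃ c₁ ∈ C, ∃ c₂ ∈ C, y = c₁ * x * c₂}

/-- `C` is malnormal in `G`: for `g ∈ G \ C`, `g⁻¹ C g ∩ C = {1}`. -/
def MalnormalIn (C G : Subgroup K) : Prop :=
  ∀ g ∈ G, g ∉ C → ∀ x ∈ C, g⁻¹ * x * g ∈ C → x = 1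

/-- The product `w 1 ⋯ w i * a * w (i+1) ⋯ w n` obtained by inserting `a`
after the first `i` terms of the sequence `w`. -/
def insProd {n : ℕ} (w : Fin n → K) (i : ℕ) (a : K) : K :=
  ((List.ofFn w).take i).prod * a * ((List.ofFn w).drop i).prod

/-!
Write the conjugator as a normal form `L` times an element `u` of `G ⊓ H`. If `L = L₀ z` is
nonempty, then `z` lies in a common factor with the first or the last letter of the cyclically
reduced word `v`, and it must cancel into `G ⊓ H` against that letter: otherwise
`L₀ z v z⁻¹ L₀⁻¹` has a normal form longer than `w`, while normal forms of the same element have the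
same length. Cancelling shortens `L` at the price of rotating `v`. Once the conjugator `u` lies in
`G ⊓ H`, comparing the prefixes of the normal forms `w` and `u v u⁻¹` yields the elements `c i`.
-/

def SameFactor (G H : Subgroup K) (a b : K) : Prop :=
  (a ∈ G ∧ b ∈ G) ∨ (a ∈ H ∧ b ∈ H)

/-- Unlike `Reduced`, a one-letter normal form must lie outside `G ⊓ H`, not merely differ
from `1`. -/
def IsNormalForm (G H : Subgroup K) (l : List K) : Prop :=
  (∀ x ∈ l, (x ∈ G ∨ x ∈ H) ∧ x ∉ G ⊓ H) ∧ l.IsChain fun a b => ¬SameFactor G H a b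

def IsCyclicallyNormal (G H : Subgroup K) (l : List K) : Prop :=
  ∀ l', l ~r l' → IsNormalForm G H l'

def invRev (l : List K) : List K := (l.map (·⁻¹)).reverse

section NormalForm

variable {G H : Subgroup K} {a b c x x' y z : K} {l l' l₁ l₂ l₃ : List K}

theorem SameFactor.symm (h : SameFactor G H a b) : SameFactor G H b a :=
  h.imp And.symm And.symm

theorem SameFactor.trans (hab : SameFactor G H a b) (hbc : SameFactor G H b c)
    (hb : b ∉ G ⊓ H) : SameFactor G H a c := by
  rcases hab with ⟨ha, hb₁⟩ | ⟨ha, hb₁⟩ <;> rcases hbc with ⟨hb₂, hc⟩ | ⟨hb₂, hc⟩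
  · exact Or.inl ⟨ha, hc⟩
  · exact absurd ⟨hb₁, hb₂⟩ hb
  · exact absurd ⟨hb₂, hb₁⟩ hb
  · exact Or.inr ⟨ha, hc⟩

@[simp]
theorem sameFactor_inv_left : SameFactor G H a⁻¹ b ↔ SameFactor G H a b := by
  simp [SameFactor]

@[simp]
theorem sameFactor_inv_right : SameFactor G H a b⁻¹ ↔ SameFactor G H a b := by
  simp [SameFactor]

theorem SameFactor.mem_left (h : SameFactor G H a b) : a ∈ G ∨ a ∈ H :=
  h.imp And.left And.left

theorem SameFactor.mul_left (h : SameFactor G H a b) : SameFactor G H (a * b) a :=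
  h.imp (fun ⟨ha, hb⟩ => ⟨mul_mem ha hb, ha⟩) (fun ⟨ha, hb⟩ => ⟨mul_mem ha hb, ha⟩)

theorem SameFactor.mul_right (h : SameFactor G H a b) : SameFactor G H (a * b) b :=
  h.imp (fun ⟨ha, hb⟩ => ⟨mul_mem ha hb, hb⟩) (fun ⟨ha, hb⟩ => ⟨mul_mem ha hb, hb⟩)

theorem sameFactor_of_mem_inf (ha : a ∈ G ∨ a ∈ H) (hc : c ∈ G ⊓ H) : SameFactor G H a c :=
  ha.imp (⟨·, hc.1⟩) (⟨·, hc.2⟩)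

theorem sameFactor_inv_mul_mul (hx : x ∈ G ∨ x ∈ H) (ha : a ∈ G ⊓ H) (hb : b ∈ G ⊓ H) :
    SameFactor G H (a⁻¹ * x * b) x :=
  hx.imp (fun hx => ⟨mul_mem (mul_mem (inv_mem ha.1) hx) hb.1, hx⟩)
    (fun hx => ⟨mul_mem (mul_mem (inv_mem ha.2) hx) hb.2, hx⟩)

theorem sameFactor_or_sameFactor (hz : z ∈ G ∨ z ∈ H) (hx : x ∈ G ∨ x ∈ H)
    (hy : y ∈ G ∨ y ∈ H) (hxy : ¬SameFactor G H x y) :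
    SameFactor G H z x ∨ SameFactor G H z y := by
  unfold SameFactor at *
  tauto

@[simp]
theorem invRev_nil : invRev ([] : List K) = [] := rfl

@[simp]
theorem invRev_cons : invRev (x :: l) = invRev l ++ [x⁻¹] := by
  simp [invRev]

@[simp]
theorem invRev_append : invRev (l₁ ++ l₂) = invRev l₂ ++ invRev l₁ := by
  simp [invRev]

@[simp]
theorem invRev_invRev : invRev (invRev l) = l := by
  simp [invRev]

@[simp]
theorem length_invRev : (invRev l).length = l.length := by
  simp [invRev]

@[simp]
theorem prod_invRev : (invRev l).prod = l.prod⁻¹ :=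
  (List.prod_inv_reverse l).symm

theorem isRotated_invRev (h : l ~r l') : invRev l ~r invRev l' :=
  (h.map _).reverse

theorem isNormalForm_singleton : IsNormalForm G H [x] ↔ (x ∈ G ∨ x ∈ H) ∧ x ∉ G ⊓ H := by
  simp [IsNormalForm]

theorem IsNormalForm.infix (h : IsNormalForm G H l) (hl : l₁ <:+: l) : IsNormalForm G H l₁ :=
  ⟨fun x hx => h.1 x (hl.subset hx), h.2.infix hl⟩

theorem IsNormalForm.append_overlap (h₁ : IsNormalForm G H (l₁ ++ l₂))
    (h₂ : IsNormalForm G H (l₂ ++ l₃)) (hl₂ : l₂ ≠ []) : IsNormalForm G H (l₁ ++ l₂ ++ l₃) := by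
  refine ⟨?_, h₁.2.append_overlap h₂.2 hl₂⟩
  simp only [List.mem_append]
  rintro x ((hx | hx) | hx)
  exacts [h₁.1 x (by simp [hx]), h₁.1 x (by simp [hx]), h₂.1 x (by simp [hx])]

theorem IsNormalForm.cons_cons (h : IsNormalForm G H (y :: l)) (hx : x ∈ G ∨ x ∈ H)
    (hxy : ¬SameFactor G H x y) : IsNormalForm G H (x :: y :: l) := by
  refine ⟨?_, List.isChain_cons_cons.2 ⟨hxy, h.2⟩⟩
  rintro a (_ | ⟨_, ha⟩)
  · exact ⟨hx, fun hxC => hxy (sameFactor_of_mem_inf (h.1 y (by simp)).1 hxC).symm⟩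
  · exact h.1 a ha

theorem IsNormalForm.replace_head (h : IsNormalForm G H (x :: l)) (hx : SameFactor G H x x')
    (hx' : x' ∉ G ⊓ H) : IsNormalForm G H (x' :: l) := by
  refine ⟨?_, ?_⟩
  · rintro a (_ | ⟨_, ha⟩)
    · exact ⟨hx.symm.mem_left, hx'⟩
    · exact h.1 a (List.mem_cons_of_mem _ ha)
  · cases l with
    | nil => exact List.isChain_singleton _
    | cons y l =>
      obtain ⟨hxy, hl⟩ := List.isChain_cons_cons.1 h.2
      exact List.isChain_cons_cons.2 ⟨fun hx'y => hxy (hx.trans hx'y hx'), hl⟩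

@[simp]
theorem isNormalForm_invRev : IsNormalForm G H (invRev l) ↔ IsNormalForm G H l := by
  suffices ∀ l : List K, IsNormalForm G H l → IsNormalForm G H (invRev l) from
    ⟨fun h => by simpa using this _ h, this l⟩
  intro l h
  refine ⟨fun x hx => ?_, ?_⟩
  · simpa using h.1 x⁻¹ (by simpa [invRev] using hx)
  · rw [invRev, List.isChain_reverse, List.isChain_map]
    exact h.2.imp fun _ _ hab hba => hab (by simpa using hba.symm)

theorem IsNormalForm.replace_last (h : IsNormalForm G H (l ++ [x])) (hx : SameFactor G H x x')
    (hx' : x' ∉ G ⊓ H) : IsNormalForm G H (l ++ [x']) := by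
  have hinv : IsNormalForm G H (x⁻¹ :: invRev l) := by simpa using isNormalForm_invRev.2 h
  simpa using isNormalForm_invRev.2
    (hinv.replace_head (x' := x'⁻¹) (by simpa using hx) (by simpa using hx'))

theorem IsCyclicallyNormal.isNormalForm (h : IsCyclicallyNormal G H l) : IsNormalForm G H l :=
  h l (List.IsRotated.refl l)

theorem IsCyclicallyNormal.of_isRotated (h : IsCyclicallyNormal G H l) (hl : l ~r l') :
    IsCyclicallyNormal G H l' :=
  fun _ hl' => h _ (hl.trans hl')

end NormalForm

section Britton

variable {G H : Subgroup K} {a₀ b₀ l : List K} {d₀ x y : K}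

theorem IsNormalForm.prod_ne_one (hB : NormalFormProperty G H) (h : IsNormalForm G H l)
    (hne : l ≠ []) : l.prod ≠ 1 := by
  have hred : Reduced G H l.get := by
    refine ⟨fun i => (h.1 _ (List.get_mem l i)).1, fun i hi => ?_, fun _ i hi => ?_⟩
    · exact not_or.1 (List.isChain_iff_getElem.1 h.2 i hi)
    · exact (h.1 _ (List.get_mem l i)).2 (hi ▸ one_mem _)
  simpa [seqProd] using hB l.length l.get (List.length_pos_iff.2 hne) hred

theorem IsNormalForm.prod_not_mem_inf (hB : NormalFormProperty G H) (h : IsNormalForm G H l)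
    (hne : l ≠ []) : l.prod ∉ G ⊓ H := by
  intro hC
  obtain ⟨l₀, y, rfl⟩ := (List.eq_nil_or_concat' l).resolve_left hne
  have hy := h.1 y (by simp)
  have hy' : y * (l₀ ++ [y]).prod⁻¹ ∉ G ⊓ H := fun h' => hy.2 (by simpa using mul_mem h' hC)
  refine (h.replace_last ?_ hy').prod_ne_one hB (by simp) (by simp)
  exact (sameFactor_of_mem_inf hy.1 (inv_mem hC)).mul_left.symm

/-- Otherwise `(a₀ x) (b₀ y)⁻¹ = d₀` would have the nonempty normal form `a₀ x y⁻¹ b₀⁻¹`, or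
`a₀ (x y⁻¹) b₀⁻¹` when `x` and `y` lie in a common factor. -/
theorem IsNormalForm.mul_inv_mem_inf_of_prod_eq (hB : NormalFormProperty G H)
    (ha : IsNormalForm G H (a₀ ++ [x])) (hb : IsNormalForm G H (b₀ ++ [y])) (hd₀ : d₀ ∈ G ⊓ H)
    (h : (a₀ ++ [x]).prod = d₀ * (b₀ ++ [y]).prod) : y * x⁻¹ ∈ G ⊓ H := by
  have hx := ha.1 x (by simp)
  have hbinv : IsNormalForm G H (y⁻¹ :: invRev b₀) := by
    simpa using isNormalForm_invRev.2 hb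
  have hprod : ∀ N : List K, N.prod = a₀.prod * x * y⁻¹ * b₀.prod⁻¹ →
      IsNormalForm G H N → N = [] := fun N hN hNF => by
    by_contra hne
    refine hNF.prod_not_mem_inf hB hne ?_
    simp only [List.prod_append, List.prod_singleton] at h
    rw [hN, h]
    simpa [mul_assoc] using hd₀
  by_cases hxy : SameFactor G H x y
  · by_contra he
    have he' : x * y⁻¹ ∉ G ⊓ H := fun h' => he (by simpa using inv_mem h')
    have hxy' : SameFactor G H x y⁻¹ := by simpa using hxy
    have hN := (ha.replace_last hxy'.mul_left.symm he').append_overlap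
      (l₃ := invRev b₀) (hbinv.replace_head hxy'.mul_right.symm he') (by simp)
    simpa using hprod _ (by simp [mul_assoc]) hN
  · have hN := ha.append_overlap (l₃ := y⁻¹ :: invRev b₀)
      (hbinv.cons_cons hx.1 (by simpa using hxy)) (by simp)
    simpa using hprod _ (by simp [mul_assoc]) hN

theorem IsNormalForm.length_eq_and_prefix_mem_inf (hB : NormalFormProperty G H) {a b : List K}
    {d : K} (ha : IsNormalForm G H a) (hb : IsNormalForm G H b) (hd₀ : d₀ ∈ G ⊓ H) (hd : d ∈ G ⊓ H)
    (h : a.prod = d₀ * b.prod * d) :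
    a.length = b.length ∧ ∀ i, (b.take i).prod⁻¹ * d₀⁻¹ * (a.take i).prod ∈ G ⊓ H := by
  induction a using List.reverseRecOn generalizing b d with
  | nil =>
    obtain rfl : b = [] := by_contra fun hne => hb.prod_not_mem_inf hB hne <| by
      rw [show b.prod = d₀⁻¹ * (d₀ * b.prod * d) * d⁻¹ by group, ← h]
      simpa using mul_mem (inv_mem hd₀) (inv_mem hd)
    simpa using inv_mem hd₀
  | append_singleton a₀ x ih =>
    obtain ⟨b₀, y, rfl⟩ := (List.eq_nil_or_concat' b).resolve_left fun hb_nil => by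
      subst hb_nil
      exact ha.prod_not_mem_inf hB (by simp) (by simpa [h] using mul_mem hd₀ hd)
    have hy := hb.1 y (by simp)
    have hyd : y * d ∉ G ⊓ H := fun h' => hy.2 (by simpa using mul_mem h' (inv_mem hd))
    have he := ha.mul_inv_mem_inf_of_prod_eq hB
      (hb.replace_last (sameFactor_of_mem_inf hy.1 hd).mul_left.symm hyd) hd₀
      (by simp [h, mul_assoc])
    obtain ⟨hlen, hpre⟩ := ih (ha.infix (List.prefix_append _ _).isInfix)
      (hb.infix (List.prefix_append _ _).isInfix) he
      (by
        simp only [List.prod_append, List.prod_singleton] at h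
        rw [show a₀.prod = a₀.prod * x * x⁻¹ by group, h]
        group)
    refine ⟨by simp [hlen], fun i => ?_⟩
    rcases le_or_gt i a₀.length with hi | hi
    · rw [List.take_append_of_le_length hi, List.take_append_of_le_length (hlen ▸ hi)]
      exact hpre i
    · rw [List.take_of_length_le (by simp; omega), List.take_of_length_le (by simp; omega), h]
      simpa [mul_assoc] using hd

end Britton

section Existence

variable {G H : Subgroup K}

theorem exists_isNormalForm_mul_left (L : List K) (hL : IsNormalForm G H L) {u : K}
    (hu : u ∈ G ⊓ H) {x : K} (hx : x ∈ G ∨ x ∈ H) :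
    ∃ L', IsNormalForm G H L' ∧ ∃ u' ∈ G ⊓ H, x * (L.prod * u) = L'.prod * u' := by
  induction L generalizing x with
  | nil =>
    by_cases hxu : x * u ∈ G ⊓ H
    · exact ⟨[], by simp [IsNormalForm], x * u, hxu, by simp⟩
    · refine ⟨[x * u], isNormalForm_singleton.2 ⟨?_, hxu⟩, 1, one_mem _, by simp⟩
      exact (sameFactor_of_mem_inf hx hu).mul_left.mem_left
  | cons y t ih =>
    have hy := hL.1 y (by simp)
    by_cases hxy : SameFactor G H x y
    · by_cases hxyC : x * y ∈ G ⊓ H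
      · obtain ⟨L', hL', u', hu', h⟩ := ih (hL.infix (List.suffix_cons y t).isInfix)
          (Or.inl hxyC.1)
        exact ⟨L', hL', u', hu', by simp [← h, mul_assoc]⟩
      · exact ⟨x * y :: t, hL.replace_head hxy.mul_right.symm hxyC, u, hu, by simp [mul_assoc]⟩
    · exact ⟨x :: y :: t, hL.cons_cons hx hxy, u, hu, by simp [mul_assoc]⟩

theorem exists_isNormalForm_mul (hgen : G ⊔ H = ⊤) (g : K) :
    ∃ L, IsNormalForm G H L ∧ ∃ u ∈ G ⊓ H, g = L.prod * u := by
  have hg : g ∈ Subgroup.closure ((G : Set K) ∪ H) := by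
    rw [Subgroup.closure_union, Subgroup.closure_eq, Subgroup.closure_eq, hgen]
    trivial
  induction hg using Subgroup.closure_induction_left with
  | one => exact ⟨[], by simp [IsNormalForm], 1, one_mem _, by simp⟩
  | mul_left x hx y _ ih =>
    obtain ⟨L, hL, u, hu, rfl⟩ := ih
    exact exists_isNormalForm_mul_left L hL hu hx
  | inv_mul_cancel x hx y _ ih =>
    obtain ⟨L, hL, u, hu, rfl⟩ := ih
    exact exists_isNormalForm_mul_left L hL hu (hx.imp (inv_mem ·) (inv_mem ·))

end Existence

section Conjugacy

variable {G H : Subgroup K}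

/-- If the last letter `z` of the conjugator could not be absorbed, `L z (x t) z⁻¹ L⁻¹` would be
a normal form `L (z x) t z⁻¹ L⁻¹` longer than `a`. -/
theorem mul_mem_inf_of_prod_eq_conj (hB : NormalFormProperty G H) {a t L : List K} {x z : K}
    (ha : IsNormalForm G H a) (hxt : IsNormalForm G H (x :: t))
    (htx : IsNormalForm G H (t ++ [x])) (ht : t ≠ []) (hlen : a.length ≤ t.length + 1)
    (hL : IsNormalForm G H (L ++ [z])) (hzx : SameFactor G H z x)
    (h : a.prod = L.prod * z * (x :: t).prod * (L.prod * z)⁻¹) : z * x ∈ G ⊓ H := by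
  by_contra hzxC
  have hz := hL.1 z (by simp)
  have hN₁ : IsNormalForm G H (L ++ [z * x] ++ t) :=
    (hL.replace_last hzx.mul_left.symm hzxC).append_overlap
      (hxt.replace_head hzx.mul_right.symm hzxC) (by simp)
  have hN₂ : IsNormalForm G H (t ++ ([z⁻¹] ++ invRev L)) := by
    rw [← List.append_assoc]
    refine (htx.replace_last (x' := z⁻¹) (by simpa using hzx.symm)
      (by simpa using hz.2)).append_overlap ?_ (by simp)
    simpa using isNormalForm_invRev.2 hL
  have hlen' := (ha.length_eq_and_prefix_mem_inf hB (hN₁.append_overlap hN₂ ht) (one_mem _)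
    (one_mem _) (by simp [h, mul_assoc])).1
  simp at hlen'
  omega

/-- `c` is `z x` or `z y⁻¹`, for the first letter `x` or the last letter `y` of `b`. -/
theorem exists_isRotated_conj_mul_mem_inf (hB : NormalFormProperty G H) {a b L : List K} {z : K}
    (ha : IsNormalForm G H a) (hb : IsCyclicallyNormal G H b) (hb2 : 2 ≤ b.length)
    (hlen : a.length ≤ b.length) (hLz : IsNormalForm G H (L ++ [z]))
    (h : a.prod = L.prod * z * b.prod * (L.prod * z)⁻¹) :
    ∃ b₁, b ~r b₁ ∧ ∃ c ∈ G ⊓ H, a.prod = L.prod * c * b₁.prod * (L.prod * c)⁻¹ := by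
  obtain ⟨x, t, y, rfl⟩ : ∃ x t y, b = x :: (t ++ [y]) := by
    obtain ⟨x, b', rfl⟩ := List.exists_cons_of_length_pos (by omega : 0 < b.length)
    obtain ⟨t, y, rfl⟩ := (List.eq_nil_or_concat' b').resolve_left (by rintro rfl; simp at hb2)
    exact ⟨x, t, y, rfl⟩
  have hrot_x : x :: (t ++ [y]) ~r t ++ [y] ++ [x] := List.isRotated_append (l := [x])
  have hrot_y : x :: (t ++ [y]) ~r y :: x :: t := List.isRotated_append (l := x :: t)
  have hyx := (List.isChain_cons_cons.1 (hb.of_isRotated hrot_y).isNormalForm.2).1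
  have hx := hb.isNormalForm.1 x (by simp)
  have hy := hb.isNormalForm.1 y (by simp)
  simp only [List.length_cons, List.length_append, List.length_nil, zero_add] at hlen
  rcases sameFactor_or_sameFactor (hLz.1 z (by simp)).1 hx.1 hy.1 (hyx ·.symm) with hzx | hzy
  · refine ⟨_, hrot_x, z * x, ?_, ?_⟩
    · exact mul_mem_inf_of_prod_eq_conj hB ha hb.isNormalForm
        (hb.of_isRotated hrot_x).isNormalForm (by simp) (by simpa) hLz hzx h
    · simp only [h, List.prod_cons, List.prod_append, List.prod_nil, mul_one]
      group
  · refine ⟨_, hrot_y, z * y⁻¹, ?_, ?_⟩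
    · exact mul_mem_inf_of_prod_eq_conj hB (isNormalForm_invRev.2 ha) (x := y⁻¹)
        (t := invRev t ++ [x⁻¹]) (by simpa using isNormalForm_invRev.2 hb.isNormalForm)
        (by simpa using isNormalForm_invRev.2 (hb.of_isRotated hrot_y).isNormalForm) (by simp)
        (by simpa) hLz (by simpa using hzy) (by simp [h, mul_assoc])
    · simp only [h, List.prod_cons, List.prod_append, List.prod_nil, mul_one]
      group

theorem exists_isRotated_conj_of_isNormalForm (hB : NormalFormProperty G H) {a b L : List K}
    {u : K} (ha : IsNormalForm G H a) (hb : IsCyclicallyNormal G H b) (hb2 : 2 ≤ b.length)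
    (hlen : a.length ≤ b.length) (hL : IsNormalForm G H L) (hu : u ∈ G ⊓ H)
    (h : a.prod = L.prod * u * b.prod * (L.prod * u)⁻¹) :
    ∃ b', b ~r b' ∧ ∃ u' ∈ G ⊓ H, a.prod = u' * b'.prod * u'⁻¹ := by
  induction L using List.reverseRecOn generalizing b u with
  | nil => exact ⟨b, List.IsRotated.refl b, u, hu, by simpa using h⟩
  | append_singleton L z ih =>
    have hz := hL.1 z (by simp)
    have hzu : IsNormalForm G H (L ++ [z * u]) :=
      hL.replace_last (sameFactor_of_mem_inf hz.1 hu).mul_left.symm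
        fun h' => hz.2 (by simpa using mul_mem h' (inv_mem hu))
    obtain ⟨b₁, hb₁, c, hc, h₁⟩ := exists_isRotated_conj_mul_mem_inf hB ha hb hb2 hlen hzu
      (by simpa [mul_assoc] using h)
    have hlen₁ := hb₁.perm.length_eq
    obtain ⟨b', hb', u', hu', h'⟩ := ih (hb.of_isRotated hb₁) (by omega) (by omega)
      (hL.infix (List.prefix_append _ _).isInfix) hc h₁
    exact ⟨b', hb₁.trans hb', u', hu', h'⟩

theorem exists_isRotated_conj (hB : NormalFormProperty G H) (hgen : G ⊔ H = ⊤) {a b : List K}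
    (ha : IsNormalForm G H a) (hb : IsCyclicallyNormal G H b) (hb2 : 2 ≤ b.length)
    (hlen : a.length ≤ b.length) {g : K} (h : a.prod = g * b.prod * g⁻¹) :
    ∃ b', b ~r b' ∧ ∃ u ∈ G ⊓ H, a.prod = u * b'.prod * u⁻¹ := by
  obtain ⟨L, hL, u, hu, rfl⟩ := exists_isNormalForm_mul hgen g
  exact exists_isRotated_conj_of_isNormalForm hB ha hb hb2 hlen hL hu h

end Conjugacy

section Sequences

variable {G H : Subgroup K} {n : ℕ}

theorem ofFn_rotate {α : Type*} (f : Fin n → α) (k : ℕ) :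
    List.ofFn (fun i : Fin n => f ⟨((i : ℕ) + k) % n, Nat.mod_lt _ i.pos⟩) =
      (List.ofFn f).rotate k :=
  List.ext_getElem (by simp) fun i _ _ => by simp [List.getElem_rotate]

theorem Reduced.isNormalForm {f : Fin n → K} (hf : Reduced G H f) (hn : 2 ≤ n) :
    IsNormalForm G H (List.ofFn f) := by
  obtain ⟨hmem, hadj, -⟩ := hf
  have hadj' : ∀ i j : Fin n, (i : ℕ) + 1 = j → ¬SameFactor G H (f i) (f j) := by
    rintro ⟨i, hi⟩ ⟨j, hj⟩ (rfl : i + 1 = j)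
    simpa [SameFactor, not_or] using hadj i hj
  refine ⟨?_, List.isChain_iff_getElem.2 fun i hi => ?_⟩
  · simp only [List.mem_ofFn, forall_exists_index]
    rintro _ i rfl
    refine ⟨hmem i, fun hC => ?_⟩
    rcases Nat.lt_or_ge ((i : ℕ) + 1) n with h | h
    · exact hadj' i ⟨i + 1, h⟩ rfl (sameFactor_of_mem_inf (hmem _) hC).symm
    · exact hadj' ⟨i - 1, by omega⟩ i (by simp; omega) (sameFactor_of_mem_inf (hmem _) hC)
  · simp only [List.length_ofFn] at hi
    simpa using hadj' ⟨i, by omega⟩ ⟨i + 1, hi⟩ rfl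

theorem CyclicallyReduced.isCyclicallyNormal {f : Fin n → K} (hf : CyclicallyReduced G H f)
    (hn : 2 ≤ n) : IsCyclicallyNormal G H (List.ofFn f) := by
  rintro _ ⟨k, rfl⟩
  rw [← ofFn_rotate]
  exact (hf k).isNormalForm hn

/-- `c i` compares the prefixes of length `i` of `w` and `u v u⁻¹`. -/
theorem exists_eq_inv_mul_mul_of_seqProd_eq_conj (hB : NormalFormProperty G H) {w v : Fin n → K}
    (hw : IsNormalForm G H (List.ofFn w)) (hv : IsNormalForm G H (List.ofFn v)) {u : K}
    (hu : u ∈ G ⊓ H) (h : seqProd w = u * seqProd v * u⁻¹) :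
    ∃ c : Fin n → K, (∀ i, c i ∈ G ⊓ H) ∧
      ∀ i : Fin n, w i = (c i)⁻¹ * v i * c ⟨((i : ℕ) + 1) % n, Nat.mod_lt _ i.pos⟩ := by
  set c : ℕ → K := fun i => ((List.ofFn v).take i).prod⁻¹ * u⁻¹ * ((List.ofFn w).take i).prod
    with hc
  have hmem := (hw.length_eq_and_prefix_mem_inf hB hv hu (inv_mem hu) h).2
  have hwrap : c n = c 0 := by
    simp only [hc, List.take_of_length_le (List.length_ofFn (f := v)).le,
      List.take_of_length_le (List.length_ofFn (f := w)).le]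
    rw [show (List.ofFn w).prod = seqProd w from rfl, h, seqProd]
    simp only [List.take_zero, List.prod_nil, mul_one]
    group
  have hstep : ∀ i (hi : i < n), w ⟨i, hi⟩ = (c i)⁻¹ * v ⟨i, hi⟩ * c (i + 1) := by
    intro i hi
    simp only [hc, List.prod_take_succ _ _ (by simpa : i < (List.ofFn v).length),
      List.prod_take_succ _ _ (by simpa : i < (List.ofFn w).length), List.getElem_ofFn]
    group
  refine ⟨fun i => c i, fun i => hmem i, fun i => ?_⟩
  have hsucc : c (((i : ℕ) + 1) % n) = c (i + 1) := by
    rcases Nat.lt_or_ge ((i : ℕ) + 1) n with hi | hi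
    · rw [Nat.mod_eq_of_lt hi]
    · rw [show (i : ℕ) + 1 = n by omega, Nat.mod_self, hwrap]
  simpa [hsucc] using hstep i i.isLt

end Sequences

theorem statement1_general (G H C : Subgroup K) (hC : C = G ⊓ H)
    (hgen : G ⊔ H = ⊤) (britton : NormalFormProperty G H)
    {n : ℕ} (hn : 2 ≤ n) (w v : Fin n → K)
    (hw : CyclicallyReduced G H w) (hv : CyclicallyReduced G H v)
    (hconj : IsConj (seqProd w) (seqProd v)) :
    ∃ k : ℕ, k < n ∧ ∃ c : Fin n → K, (∀ i, c i ∈ C) ∧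
      (∀ i : Fin n,
        w i = (c i)⁻¹ * v ⟨((i : ℕ) + k) % n, Nat.mod_lt _ i.pos⟩ *
          c ⟨((i : ℕ) + 1) % n, Nat.mod_lt _ i.pos⟩) ∧
      (∀ i : Fin n,
        (w i ∈ G ∧ v ⟨((i : ℕ) + k) % n, Nat.mod_lt _ i.pos⟩ ∈ G) ∨
        (w i ∈ H ∧ v ⟨((i : ℕ) + k) % n, Nat.mod_lt _ i.pos⟩ ∈ H)) := by
  subst hC
  have hw' := (hw.isCyclicallyNormal hn).isNormalForm
  obtain ⟨g, hg⟩ := isConj_iff.1 hconj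
  obtain ⟨_, ⟨k, rfl⟩, u, hu, h⟩ := exists_isRotated_conj britton hgen hw'
    (hv.isCyclicallyNormal hn) (by simpa) (by simp) (g := g⁻¹)
    (by rw [← seqProd, ← seqProd, ← hg]; group)
  have hv' := (hv (k % n)).isNormalForm hn
  rw [← List.rotate_mod, List.length_ofFn, ← ofFn_rotate] at h
  obtain ⟨c, hc, hwc⟩ := exists_eq_inv_mul_mul_of_seqProd_eq_conj britton hw' hv' hu h
  refine ⟨k % n, Nat.mod_lt _ (by omega), c, hc, hwc, fun i => ?_⟩
  rw [hwc i]
  exact sameFactor_inv_mul_mul ((hv (k % n)).1 i) (hc i) (hc _)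

/-- If two cyclically reduced sequences of length `n ≥ 2` in an
amalgamated free product `G *_C H` have conjugate products, then one is obtained from a
cyclic rotation of the other by conjugating termwise by elements of `C`:
there are `k` and `c i ∈ C` with `w i = (c i)⁻¹ * v (i + k) * c (i + 1)` (indices mod
`n`); in particular `w i` and `v (i + k)` lie in the same factor. -/
theorem statement1 (G H C : Subgroup K) (hCG : C ≤ G) (hCH : C ≤ H) (hC : C = G ⊓ H)
    (hgen : G ⊔ H = ⊤) (britton : NormalFormProperty G H)
    {n : ℕ} (hn : 2 ≤ n) (w v : Fin n → K)
    (hw : CyclicallyReduced G H w) (hv : CyclicallyReduced G H v)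
    (hconj : IsConj (seqProd w) (seqProd v)) :
    ∃ k : ℕ, k < n ∧ ∃ c : Fin n → K, (∀ i, c i ∈ C) ∧
      (∀ i : Fin n,
        w i = (c i)⁻¹ * v ⟨((i : ℕ) + k) % n, Nat.mod_lt _ i.pos⟩ *
          c ⟨((i : ℕ) + 1) % n, Nat.mod_lt _ i.pos⟩) ∧
      (∀ i : Fin n,
        (w i ∈ G ∧ v ⟨((i : ℕ) + k) % n, Nat.mod_lt _ i.pos⟩ ∈ G) ∨
        (w i ∈ H ∧ v ⟨((i : ℕ) + k) % n, Nat.mod_lt _ i.pos⟩ ∈ H)) :=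
  statement1_general G H C hC hgen britton hn w v hw hv hconj

end AmalgamStmt
end

section
/- Let G *_C H be an amalgamated free product in which C is malnormal in G and malnormal in H. Let a, b ∈ C, and let (w_1, w_2) and (v_1, v_2) be reduced sequences such that the sets of double cosets {C w_1 a w_2 C, C v_1 v_2 C} and {C w_1 w_2 C, C v_1 b v_2 C} are equal. Then a and b are conjugate in C; moreover, if a ≠ 1 or b ≠ 1, then w_1 and v_1 lie in the same factor (both in G or both in H). -/
/-!
Abstract model of an amalgamated free product `G *_C H`:
a group `K` with subgroups `G`, `H` and `C = G ⊓ H`, generated by `G ⊔ H`,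
in which the normal form theorem (the product of a nonempty reduced
sequence is not the identity) holds.
-/

namespace AmalgamStmt

variable {K : Type*} [Group K]

section Helpers

variable {G H C : Subgroup K}

lemma pairFacts (hC : C = G ⊓ H) {w₁ w₂ : K} (hw : Reduced G H ![w₁, w₂]) :
    (w₁ ∈ G ∧ w₂ ∈ H ∨ w₁ ∈ H ∧ w₂ ∈ G) ∧ w₁ ∉ C ∧ w₂ ∉ C := by
  obtain ⟨hmem, hpair, -⟩ := hw
  have h0 : w₁ ∈ G ∨ w₁ ∈ H := hmem 0
  have h1 : w₂ ∈ G ∨ w₂ ∈ H := hmem 1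
  have hp := hpair 0 (by omega)
  have hpG : ¬(w₁ ∈ G ∧ w₂ ∈ G) := hp.1
  have hpH : ¬(w₁ ∈ H ∧ w₂ ∈ H) := hp.2
  subst hC
  rcases h0 with h0 | h0 <;> rcases h1 with h1 | h1
  · exact absurd ⟨h0, h1⟩ hpG
  · exact ⟨Or.inl ⟨h0, h1⟩, fun h => hpH ⟨h.2, h1⟩, fun h => hpG ⟨h0, h.1⟩⟩
  · exact ⟨Or.inr ⟨h0, h1⟩, fun h => hpG ⟨h.1, h1⟩, fun h => hpH ⟨h0, h.2⟩⟩
  · exact absurd ⟨h0, h1⟩ hpH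

lemma britton4 (britton : NormalFormProperty G H) (hC : C = G ⊓ H)
    {u₀ u₁ u₂ u₃ : K}
    (hmem : (u₀ ∈ G ∧ u₁ ∈ H ∧ u₂ ∈ G ∧ u₃ ∈ H) ∨ (u₀ ∈ H ∧ u₁ ∈ G ∧ u₂ ∈ H ∧ u₃ ∈ G))
    (n₀ : u₀ ∉ C) (n₁ : u₁ ∉ C) (n₂ : u₂ ∉ C) (n₃ : u₃ ∉ C) :
    u₀ * u₁ * u₂ * u₃ ≠ 1 := by
  subst hC
  have key : Reduced G H ![u₀, u₁, u₂, u₃] := by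
    refine ⟨?_, ?_, by omega⟩
    · intro i
      fin_cases i
      · exact hmem.imp And.left And.left
      · exact hmem.elim (fun h => Or.inr h.2.1) (fun h => Or.inl h.2.1)
      · exact hmem.imp (fun h => h.2.2.1) (fun h => h.2.2.1)
      · exact hmem.elim (fun h => Or.inr h.2.2.2) (fun h => Or.inl h.2.2.2)
    · intro i h
      have step : ∀ x y : K, x ∉ (G ⊓ H) → y ∉ (G ⊓ H) →
          ((x ∈ G ∧ y ∈ H) ∨ (x ∈ H ∧ y ∈ G)) →
          ¬(x ∈ G ∧ y ∈ G) ∧ ¬(x ∈ H ∧ y ∈ H) := by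
        rintro x y nx ny (⟨hx, hy⟩ | ⟨hx, hy⟩)
        · exact ⟨fun h => ny ⟨h.2, hy⟩, fun h => nx ⟨hx, h.1⟩⟩
        · exact ⟨fun h => nx ⟨h.1, hx⟩, fun h => ny ⟨hy, h.2⟩⟩
      have h3 : i < 3 := by omega
      interval_cases i
      · exact step u₀ u₁ n₀ n₁ (hmem.imp (fun h => ⟨h.1, h.2.1⟩) (fun h => ⟨h.1, h.2.1⟩))
      · exact step u₁ u₂ n₁ n₂ (hmem.elim (fun h => Or.inr ⟨h.2.1, h.2.2.1⟩)
          (fun h => Or.inl ⟨h.2.1, h.2.2.1⟩))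
      · exact step u₂ u₃ n₂ n₃ (hmem.imp (fun h => ⟨h.2.2.1, h.2.2.2⟩)
          (fun h => ⟨h.2.2.1, h.2.2.2⟩))
  have := britton 4 ![u₀, u₁, u₂, u₃] (by omega) key
  intro h
  apply this
  show (List.ofFn ![u₀, u₁, u₂, u₃]).prod = 1
  have : (List.ofFn (![u₀,u₁,u₂,u₃] : Fin 4 → K)).prod = u₀*(u₁*(u₂*(u₃*1))) := rfl
  rw [this]; simpa [mul_assoc] using h


/-- Uniqueness of normal form for products of reduced pairs, up to shifting by `C`. -/
lemma key (hCG : C ≤ G) (hCH : C ≤ H) (hC : C = G ⊓ H) (britton : NormalFormProperty G H)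
    {x₁ x₂ y₁ y₂ c₁ c₂ : K}
    (hx : x₁ ∈ G ∧ x₂ ∈ H ∨ x₁ ∈ H ∧ x₂ ∈ G) (nx₁ : x₁ ∉ C) (nx₂ : x₂ ∉ C)
    (hy : y₁ ∈ G ∧ y₂ ∈ H ∨ y₁ ∈ H ∧ y₂ ∈ G) (ny₁ : y₁ ∉ C) (ny₂ : y₂ ∉ C)
    (hc₁ : c₁ ∈ C) (hc₂ : c₂ ∈ C)
    (heq : x₁ * x₂ = c₁ * (y₁ * y₂) * c₂) :
    ((x₁ ∈ G ∧ y₁ ∈ G) ∨ (x₁ ∈ H ∧ y₁ ∈ H)) ∧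
      ∃ d ∈ C, x₁ = c₁ * y₁ * d ∧ x₂ = d⁻¹ * y₂ * c₂ := by
  have same : ∀ {d : K}, d = y₁⁻¹ * c₁⁻¹ * x₁ →
      d ∈ C → ((x₁ ∈ G ∧ y₁ ∈ G) ∨ (x₁ ∈ H ∧ y₁ ∈ H)) →
      ((x₁ ∈ G ∧ y₁ ∈ G) ∨ (x₁ ∈ H ∧ y₁ ∈ H)) ∧
        ∃ d ∈ C, x₁ = c₁ * y₁ * d ∧ x₂ = d⁻¹ * y₂ * c₂ := by
    intro d hd hdC hfac
    refine ⟨hfac, d, hdC, by rw [hd]; group, ?_⟩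
    rw [hd]
    have : x₂ = x₁⁻¹ * (x₁ * x₂) := by group
    rw [this, heq]; group
  have hd2 : ∀ {d : K}, d = y₁⁻¹ * c₁⁻¹ * x₁ → d = y₂ * c₂ * x₂⁻¹ := by
    intro d hd
    rw [hd]
    have : x₁ = (c₁ * (y₁ * y₂) * c₂) * x₂⁻¹ := by rw [← heq]; group
    rw [this]; group
  have contra : ∀ {u₀ u₁ u₂ u₃ : K},
      ((u₀ ∈ G ∧ u₁ ∈ H ∧ u₂ ∈ G ∧ u₃ ∈ H) ∨ (u₀ ∈ H ∧ u₁ ∈ G ∧ u₂ ∈ H ∧ u₃ ∈ G)) →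
      u₀ ∉ C → u₁ ∉ C → u₂ ∉ C → u₃ ∉ C → u₀ * u₁ * u₂ * u₃ = 1 → False :=
    fun hm n0 n1 n2 n3 h => britton4 britton hC hm n0 n1 n2 n3 h
  rcases hx with ⟨hx₁, hx₂⟩ | ⟨hx₁, hx₂⟩ <;> rcases hy with ⟨hy₁, hy₂⟩ | ⟨hy₁, hy₂⟩
  · -- x₁, y₁ ∈ G
    set d := y₁⁻¹ * c₁⁻¹ * x₁ with hd
    have hdG : d ∈ G := mul_mem (mul_mem (inv_mem hy₁) (inv_mem (hCG hc₁))) hx₁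
    have hdH : d ∈ H := by
      rw [hd2 rfl]
      exact mul_mem (mul_mem hy₂ (hCH hc₂)) (inv_mem hx₂)
    exact same rfl (hC ▸ ⟨hdG, hdH⟩) (Or.inl ⟨hx₁, hy₁⟩)
  · -- x₁ ∈ G, y₁ ∈ H : contradiction
    exfalso
    refine contra (u₀ := x₁⁻¹ * c₁) (u₁ := y₁) (u₂ := y₂) (u₃ := c₂ * x₂⁻¹)
      (Or.inl ⟨mul_mem (inv_mem hx₁) (hCG hc₁), hy₁, hy₂, mul_mem (hCH hc₂) (inv_mem hx₂)⟩)
      ?_ ny₁ ny₂ ?_ ?_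
    · intro h
      exact nx₁ (by simpa using mul_mem hc₁ (C.inv_mem h))
    · intro h
      exact nx₂ (by simpa [mul_assoc] using C.inv_mem (mul_mem (C.inv_mem hc₂) h))
    · have : x₁⁻¹ * c₁ * y₁ * y₂ * (c₂ * x₂⁻¹) = x₁⁻¹ * (c₁ * (y₁ * y₂) * c₂) * x₂⁻¹ := by
        group
      rw [this, ← heq]; group
  · -- x₁ ∈ H, y₁ ∈ G : contradiction
    exfalso
    refine contra (u₀ := x₁⁻¹ * c₁) (u₁ := y₁) (u₂ := y₂) (u₃ := c₂ * x₂⁻¹)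
      (Or.inr ⟨mul_mem (inv_mem hx₁) (hCH hc₁), hy₁, hy₂, mul_mem (hCG hc₂) (inv_mem hx₂)⟩)
      ?_ ny₁ ny₂ ?_ ?_
    · intro h
      exact nx₁ (by simpa using mul_mem hc₁ (C.inv_mem h))
    · intro h
      exact nx₂ (by simpa [mul_assoc] using C.inv_mem (mul_mem (C.inv_mem hc₂) h))
    · have : x₁⁻¹ * c₁ * y₁ * y₂ * (c₂ * x₂⁻¹) = x₁⁻¹ * (c₁ * (y₁ * y₂) * c₂) * x₂⁻¹ := by
        group
      rw [this, ← heq]; group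
  · -- x₁, y₁ ∈ H
    set d := y₁⁻¹ * c₁⁻¹ * x₁ with hd
    have hdH : d ∈ H := mul_mem (mul_mem (inv_mem hy₁) (inv_mem (hCH hc₁))) hx₁
    have hdG : d ∈ G := by
      rw [hd2 rfl]
      exact mul_mem (mul_mem hy₂ (hCG hc₂)) (inv_mem hx₂)
    exact same rfl (hC ▸ ⟨hdG, hdH⟩) (Or.inr ⟨hx₁, hy₁⟩)

/-- If `g = x * g * f` with `g` in a factor but not in `C` and `x, f ∈ C`,
then `x = f = 1`, by malnormality. -/
lemma squeeze (hmalG : MalnormalIn C G) (hmalH : MalnormalIn C H)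
    {g : K} (hg : g ∈ G ∨ g ∈ H) (hgC : g ∉ C) {x f : K}
    (hx : x ∈ C) (hf : f ∈ C) (heq : g = x * g * f) : x = 1 ∧ f = 1 := by
  have h1 : g * f⁻¹ = x * g := by rw [mul_inv_eq_iff_eq_mul]; exact heq
  have hconj : g⁻¹ * x * g = f⁻¹ := by rw [mul_assoc, ← h1]; group
  have hx1 : x = 1 := by
    rcases hg with hg | hg
    · exact hmalG g hg hgC x hx (hconj ▸ C.inv_mem hf)
    · exact hmalH g hg hgC x hx (hconj ▸ C.inv_mem hf)
  refine ⟨hx1, ?_⟩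
  rw [hx1, one_mul] at heq
  exact (mul_left_cancel (a := g) (show g * 1 = g * f by rw [mul_one]; exact heq)).symm

end Helpers

/-- Suppose `C` is malnormal in both factors of `G *_C H`.  If
`(w₁, w₂)` and `(v₁, v₂)` are reduced sequences and the sets of double cosets
`{C w₁ a w₂ C, C v₁ v₂ C}` and `{C w₁ w₂ C, C v₁ b v₂ C}` are equal (for `a, b ∈ C`),
then `a` and `b` are conjugate in `C`; moreover if `a ≠ 1` or `b ≠ 1` then `w₁` and
`v₁` lie in the same factor. -/
theorem statement3 (G H C : Subgroup K) (hCG : C ≤ G) (hCH : C ≤ H) (hC : C = G ⊓ H)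
    (hgen : G ⊔ H = ⊤) (britton : NormalFormProperty G H)
    (hmalG : MalnormalIn C G) (hmalH : MalnormalIn C H)
    (a b : K) (ha : a ∈ C) (hb : b ∈ C)
    (w₁ w₂ v₁ v₂ : K) (hw : Reduced G H ![w₁, w₂]) (hv : Reduced G H ![v₁, v₂])
    (hsets : ({doubleCoset C (w₁ * a * w₂), doubleCoset C (v₁ * v₂)} : Set (Set K)) =
      {doubleCoset C (w₁ * w₂), doubleCoset C (v₁ * b * v₂)}) :
    (∃ c ∈ C, c * a * c⁻¹ = b) ∧
      ((a ≠ 1 ∨ b ≠ 1) → (w₁ ∈ G ∧ v₁ ∈ G) ∨ (w₁ ∈ H ∧ v₁ ∈ H)) := by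
  obtain ⟨hwF, hw1, hw2⟩ := pairFacts hC hw
  obtain ⟨hvF, hv1, hv2⟩ := pairFacts hC hv
  have extract : ∀ x y : K, doubleCoset C x = doubleCoset C y →
      ∃ c₁ ∈ C, ∃ c₂ ∈ C, x = c₁ * y * c₂ := by
    intro x y hxy
    have hx : x ∈ doubleCoset C x := ⟨1, C.one_mem, 1, C.one_mem, by group⟩
    rw [hxy] at hx
    exact hx
  have hwF' : w₁ ∈ G ∧ a * w₂ ∈ H ∨ w₁ ∈ H ∧ a * w₂ ∈ G :=
    hwF.imp (fun h => ⟨h.1, mul_mem (hCH ha) h.2⟩) (fun h => ⟨h.1, mul_mem (hCG ha) h.2⟩)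
  have hw2' : a * w₂ ∉ C := fun h => hw2 (by simpa using mul_mem (C.inv_mem ha) h)
  have hvF' : v₁ ∈ G ∧ b * v₂ ∈ H ∨ v₁ ∈ H ∧ b * v₂ ∈ G :=
    hvF.imp (fun h => ⟨h.1, mul_mem (hCH hb) h.2⟩) (fun h => ⟨h.1, mul_mem (hCG hb) h.2⟩)
  have hv2' : b * v₂ ∉ C := fun h => hv2 (by simpa using mul_mem (C.inv_mem hb) h)
  have hwg : w₁ ∈ G ∨ w₁ ∈ H := hwF.imp And.left And.left
  have hw2g : w₂ ∈ G ∨ w₂ ∈ H := hwF.elim (fun h => Or.inr h.2) (fun h => Or.inl h.2)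
  have hvg : v₁ ∈ G ∨ v₁ ∈ H := hvF.imp And.left And.left
  have hv2g : v₂ ∈ G ∨ v₂ ∈ H := hvF.elim (fun h => Or.inr h.2) (fun h => Or.inl h.2)
  rcases Set.pair_eq_pair_iff.mp hsets with ⟨h1, h2⟩ | ⟨h1, h2⟩
  · -- Case A: both a and b are trivial
    obtain ⟨c₁, hc₁, c₂, hc₂, he⟩ := extract _ _ h1
    have he' : w₁ * (a * w₂) = c₁ * (w₁ * w₂) * c₂ := by
      rw [← mul_assoc]; exact he
    obtain ⟨-, d, hd, e1, e2⟩ :=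
      key hCG hCH hC britton hwF' hw1 hw2' hwF hw1 hw2 hc₁ hc₂ he'
    obtain ⟨hc₁1, hd1⟩ := squeeze hmalG hmalH hwg hw1 hc₁ hd e1
    have e2' : w₂ = a⁻¹ * w₂ * c₂ := by
      have st : a⁻¹ * w₂ * c₂ = a⁻¹ * (d⁻¹ * w₂ * c₂) := by rw [hd1]; group
      rw [st, ← e2]; group
    have ha1 : a = 1 := by
      have := (squeeze hmalG hmalH hw2g hw2 (C.inv_mem ha) hc₂ e2').1
      exact inv_eq_one.mp this
    obtain ⟨c₁', hc₁', c₂', hc₂', hf⟩ := extract _ _ h2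
    have hf' : v₁ * v₂ = c₁' * (v₁ * (b * v₂)) * c₂' := by
      rw [← mul_assoc v₁ b v₂]; exact hf
    obtain ⟨-, d', hd', f1, f2⟩ :=
      key hCG hCH hC britton hvF hv1 hv2 hvF' hv1 hv2' hc₁' hc₂' hf'
    obtain ⟨hc₁'1, hd'1⟩ := squeeze hmalG hmalH hvg hv1 hc₁' hd' f1
    have f2' : v₂ = b * v₂ * c₂' := by
      have st : b * v₂ * c₂' = d'⁻¹ * (b * v₂) * c₂' := by rw [hd'1]; group
      rw [st, ← f2]
    have hb1 : b = 1 := (squeeze hmalG hmalH hv2g hv2 hb hc₂' f2').1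
    refine ⟨⟨1, C.one_mem, by rw [ha1, hb1]; group⟩, fun h => ?_⟩
    rcases h with h | h
    · exact absurd ha1 h
    · exact absurd hb1 h
  · -- Case B: a and b are conjugate via d ∈ C
    obtain ⟨c₁, hc₁, c₂, hc₂, he⟩ := extract _ _ h1
    have he' : w₁ * (a * w₂) = c₁ * (v₁ * (b * v₂)) * c₂ := by
      rw [← mul_assoc w₁ a w₂, ← mul_assoc v₁ b v₂]; exact he
    obtain ⟨FC, d, hd, E1, E2⟩ :=
      key hCG hCH hC britton hwF' hw1 hw2' hvF' hv1 hv2' hc₁ hc₂ he'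
    obtain ⟨c₁', hc₁', c₂', hc₂', hf⟩ := extract _ _ h2
    obtain ⟨-, d', hd', F1, F2⟩ :=
      key hCG hCH hC britton hvF hv1 hv2 hwF hw1 hw2 hc₁' hc₂' hf
    have step1 : (c₁ * c₁') * w₁ * (d' * d) = c₁ * (c₁' * w₁ * d') * d := by group
    have E1' : w₁ = (c₁ * c₁') * w₁ * (d' * d) := by rw [step1, ← F1, ← E1]
    obtain ⟨-, hdd⟩ := squeeze hmalG hmalH hwg hw1 (mul_mem hc₁ hc₁') (mul_mem hd' hd) E1'
    have hd'd : d' = d⁻¹ := eq_inv_of_mul_eq_one_left hdd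
    have F2' : v₂ = d * w₂ * c₂' := by rw [F2, hd'd, inv_inv]
    have step2 : (a⁻¹ * (d⁻¹ * b * d)) * w₂ * (c₂' * c₂) =
        a⁻¹ * (d⁻¹ * (b * (d * w₂ * c₂')) * c₂) := by group
    have E2w : w₂ = (a⁻¹ * (d⁻¹ * b * d)) * w₂ * (c₂' * c₂) := by
      rw [step2, ← F2', ← E2]; group
    have hx : a⁻¹ * (d⁻¹ * b * d) ∈ C :=
      mul_mem (C.inv_mem ha) (mul_mem (mul_mem (C.inv_mem hd) hb) hd)
    have h0 := (squeeze hmalG hmalH hw2g hw2 hx (mul_mem hc₂' hc₂) E2w).1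
    have haa : a = d⁻¹ * b * d := inv_mul_eq_one.mp h0
    exact ⟨⟨d, hd, by rw [haa]; group⟩, fun _ => FC⟩

end AmalgamStmt
end

section
/- Let F be a free group and let a and b be primitive elements of F. If there exist nonzero integers n, m and g ∈ F such that a^m g b^n g^{-1} = 1, then a is conjugate to b or a is conjugate to b^{-1}. -/
/-- An element of a free group is *primitive* if it belongs to some free basis,
equivalently if it is the image of a generator under an automorphism. -/
def IsPrimitiveElt {α : Type*} (a : FreeGroup α) : Prop :=
  ∃ (e : FreeGroup α ≃* FreeGroup α) (i : α), e (FreeGroup.of i) = a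

/-!
Put `c := g * b * g⁻¹`, again primitive, so that `a ^ m * c ^ n = 1`. By Nielsen–Schreier
the subgroup `⟨a, c⟩` is free. If it had two distinct basis elements, it would map onto `ℤ²`,
and the images of `a` and `c` would generate `ℤ²` while being linearly dependent, which is
impossible.
So `⟨a, c⟩` is cyclic, generated by some `z`. A primitive element is not a proper power (it has
exponent sum `1` in a suitable basis), hence `a = z ^ (±1)` and `c = z ^ (±1)`.
-/

theorem closure_pair_ne_top_of_smul_add_smul_eq_zero {A C : ℤ × ℤ} {m n : ℤ} (hm : m ≠ 0)
    (hrel : m • A + n • C = 0) : AddSubgroup.closure {A, C} ≠ ⊤ := by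
  intro htop
  obtain ⟨p, q, h₁⟩ :=
    AddSubgroup.mem_closure_pair.mp (htop ▸ AddSubgroup.mem_top ((1, 0) : ℤ × ℤ))
  obtain ⟨u, v, h₂⟩ :=
    AddSubgroup.mem_closure_pair.mp (htop ▸ AddSubgroup.mem_top ((0, 1) : ℤ × ℤ))
  simp only [Prod.ext_iff, Prod.fst_add, Prod.snd_add, Prod.smul_fst, Prod.smul_snd, smul_eq_mul,
    Prod.fst_zero, Prod.snd_zero] at h₁ h₂ hrel
  -- `det (A, C)` vanishes, yet it divides `det (e₁, e₂) = 1`.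
  have hdet : A.1 * C.2 - A.2 * C.1 = 0 :=
    mul_left_cancel₀ hm (by linear_combination C.2 * hrel.1 - C.1 * hrel.2)
  have hunit : (p * v - q * u) * (A.1 * C.2 - A.2 * C.1) = 1 := by
    linear_combination (u * A.2 + v * C.2) * h₁.1 - (u * A.1 + v * C.1) * h₁.2 + h₂.2
  simp [hdet] at hunit

instance FreeGroup.isCyclic_of_subsingleton {β : Type*} [Subsingleton β] :
    IsCyclic (FreeGroup β) := by
  cases isEmpty_or_nonempty β
  · infer_instance
  · have : Unique β := uniqueOfSubsingleton (Classical.arbitrary β)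
    infer_instance

theorem IsFreeGroup.isCyclic_of_zpow_mul_zpow_eq_one {G : Type*} [Group G] [IsFreeGroup G]
    {a c : G} {m n : ℤ} (hm : m ≠ 0) (hcl : Subgroup.closure {a, c} = ⊤)
    (hrel : a ^ m * c ^ n = 1) : IsCyclic G := by
  suffices Subsingleton (Generators G) from
    isCyclic_of_surjective (toFreeGroup G).symm (toFreeGroup G).symm.surjective
  refine ⟨fun s t => by_contra fun hst => ?_⟩
  classical
  let P : G →* Multiplicative (ℤ × ℤ) :=
    lift fun u => .ofAdd ((if u = s then 1 else 0), (if u = t then 1 else 0))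
  have hP : ∀ v : ℤ × ℤ, P (of s ^ v.1 * of t ^ v.2) = .ofAdd v := fun v => by
    simp [P, lift_of, hst, Ne.symm hst, ← ofAdd_zsmul, ← ofAdd_add]
  refine closure_pair_ne_top_of_smul_add_smul_eq_zero
    (A := (P a).toAdd) (C := (P c).toAdd) (n := n) hm ?_ (eq_top_iff.mpr fun v _ => ?_)
  · simpa using congrArg (fun x => (P x).toAdd) hrel
  · have hmem : P (of s ^ v.1 * of t ^ v.2) ∈ Subgroup.closure {P a, P c} := by
      rw [← Set.image_pair, ← MonoidHom.map_closure, hcl]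
      exact Subgroup.mem_map_of_mem P (Subgroup.mem_top _)
    obtain ⟨p, q, hpq⟩ := Subgroup.mem_closure_pair.mp hmem
    exact AddSubgroup.mem_closure_pair.mpr
      ⟨p, q, by simpa [hP] using congrArg Multiplicative.toAdd hpq⟩

namespace IsPrimitiveElt

variable {α : Type*} {a : FreeGroup α}

theorem map (ha : IsPrimitiveElt a) (f : FreeGroup α ≃* FreeGroup α) :
    IsPrimitiveElt (f a) := by
  obtain ⟨e, i, rfl⟩ := ha
  exact ⟨e.trans f, i, rfl⟩

theorem eq_one_or_eq_neg_one_of_eq_zpow (ha : IsPrimitiveElt a) {w : FreeGroup α} {p : ℤ}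
    (h : a = w ^ p) : p = 1 ∨ p = -1 := by
  obtain ⟨e, i, rfl⟩ := ha
  classical
  let ψ : FreeGroup α →* Multiplicative ℤ :=
    (FreeGroup.lift fun j => if j = i then .ofAdd 1 else 1).comp e.symm.toMonoidHom
  have hψ : 1 = p * (ψ w).toAdd := by simpa [ψ] using congrArg (fun x => (ψ x).toAdd) h
  exact Int.eq_one_or_neg_one_of_mul_eq_one hψ.symm

theorem eq_or_eq_inv_of_zpow_mul_zpow_eq_one {c : FreeGroup α} (ha : IsPrimitiveElt a)
    (hc : IsPrimitiveElt c) {m n : ℤ} (hm : m ≠ 0) (hrel : a ^ m * c ^ n = 1) :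
    a = c ∨ a = c⁻¹ := by
  let K := Subgroup.closure {a, c}
  let a' : K := ⟨a, Subgroup.subset_closure (by simp)⟩
  let c' : K := ⟨c, Subgroup.subset_closure (by simp)⟩
  have hcl : Subgroup.closure {a', c'} = ⊤ := by
    convert Subgroup.closure_closure_coe_preimage (k := {a, c})
    ext x
    simp [a', c', Subtype.ext_iff]
  have : IsCyclic K := IsFreeGroup.isCyclic_of_zpow_mul_zpow_eq_one (a := a') (c := c') hm hcl
    (Subtype.ext (by simpa using hrel))
  obtain ⟨z, hz⟩ := IsCyclic.exists_generator (α := K)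
  obtain ⟨p, hp⟩ := hz a'
  obtain ⟨q, hq⟩ := hz c'
  have hpz : a = (z : FreeGroup α) ^ p := by simpa using congrArg Subtype.val hp.symm
  have hqz : c = (z : FreeGroup α) ^ q := by simpa using congrArg Subtype.val hq.symm
  rcases ha.eq_one_or_eq_neg_one_of_eq_zpow hpz with rfl | rfl <;>
    rcases hc.eq_one_or_eq_neg_one_of_eq_zpow hqz with rfl | rfl <;> simp [hpz, hqz]

end IsPrimitiveElt

theorem statement14_general {α : Type*} (a b : FreeGroup α)
    (hpa : IsPrimitiveElt a) (hpb : IsPrimitiveElt b)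
    (g : FreeGroup α) (m n : ℤ) (hm : m ≠ 0)
    (h : a ^ m * g * b ^ n * g⁻¹ = 1) :
    IsConj a b ∨ IsConj a b⁻¹ := by
  have hrel : a ^ m * (g * b * g⁻¹) ^ n = 1 := by rw [conj_zpow, ← h]; group
  rcases hpa.eq_or_eq_inv_of_zpow_mul_zpow_eq_one (hpb.map (MulAut.conj g)) hm hrel with hab | hab
  · exact .inl (isConj_iff.mpr ⟨g⁻¹, by rw [hab, MulAut.conj_apply]; group⟩)
  · exact .inr (isConj_iff.mpr ⟨g⁻¹, by rw [hab, MulAut.conj_apply]; group⟩)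

/-- If `a` and `b` are primitive elements of a free group `F` and
`a ^ m * g * b ^ n * g⁻¹ = 1` for some nonzero integers `m`, `n` and some `g ∈ F`, then
`a` is conjugate to `b` or to `b⁻¹`. -/
theorem statement14 {α : Type*} (a b : FreeGroup α)
    (hpa : IsPrimitiveElt a) (hpb : IsPrimitiveElt b)
    (g : FreeGroup α) (m n : ℤ) (hm : m ≠ 0) (hn : n ≠ 0)
    (h : a ^ m * g * b ^ n * g⁻¹ = 1) :
    IsConj a b ∨ IsConj a b⁻¹ :=
  statement14_general a b hpa hpb g m n hm h
end

section
/- Let F be a free group, let a be a primitive element of F, and let A be the cyclic subgroup generated by a. Then for every g ∈ F \ A, g and g^{-1} do not lie in the same double coset modulo A, that is, there are no integers m, n with g^{-1} = a^m g a^n; equivalently, g a^m g a^n ≠ 1 for all nonzero integers m, n. -/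
namespace Stmt15
open FreeGroup List

variable {α : Type*} [DecidableEq α]

/-- A word is reduced iff no adjacent cancelling pair. -/
def Reduced (L : List (α × Bool)) : Prop :=
  List.Chain' (fun x y => ¬(x.1 = y.1 ∧ x.2 = !y.2)) L

theorem Reduced.reduce_eq {L : List (α × Bool)} (h : Reduced L) : reduce L = L := by
  induction L with
  | nil => rfl
  | cons x L ih =>
    have hL : reduce L = L := ih h.tail
    rw [reduce.cons, hL]
    cases L with
    | nil => rfl
    | cons hd tl =>
      have : ¬(x.1 = hd.1 ∧ x.2 = !hd.2) := (List.isChain_cons_cons.mp h).1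
      simp [this]

theorem reduced_reduce (L : List (α × Bool)) : Reduced (reduce L) := by
  induction L with
  | nil => exact List.isChain_nil
  | cons x L ih =>
    rw [reduce.cons]
    cases h : reduce L with
    | nil => exact List.isChain_singleton _
    | cons hd tl =>
      rw [h] at ih
      dsimp only
      by_cases hc : x.1 = hd.1 ∧ x.2 = !hd.2
      · rw [if_pos hc]; exact ih.tail
      · rw [if_neg hc]; exact List.isChain_cons_cons.mpr ⟨hc, ih⟩

theorem reduced_toWord (g : FreeGroup α) : Reduced (toWord g) := by
  rw [← reduce_toWord g]; exact reduced_reduce _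

theorem toWord_mk_of_reduced {L : List (α × Bool)} (h : Reduced L) :
    toWord (mk L) = L := by rw [toWord_mk, h.reduce_eq]

theorem norm_eq_length (g : FreeGroup α) : norm g = (toWord g).length := rfl

theorem inv_single (a : α × Bool) : (mk [a])⁻¹ = mk [(a.1, !a.2)] := by
  rw [inv_mk]; rfl

theorem peel {g : FreeGroup α} {a : α × Bool} {M : List (α × Bool)}
    (h : toWord g = a :: M) : toWord (mk [(a.1, !a.2)] * g) = M := by
  have hred : reduce (a :: M) = a :: M := by rw [← h]; exact reduce_toWord g
  have h2 : mk [(a.1, !a.2)] * g = mk ((a.1, !a.2) :: a :: M) := by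
    have : ((a.1, !a.2) :: a :: M) = [(a.1, !a.2)] ++ (a :: M) := rfl
    rw [this, ← mul_mk, ← h, mk_toWord]
  rw [h2, toWord_mk, reduce.cons, hred]
  simp


theorem sq_eq_one : ∀ (n : ℕ) (u : FreeGroup α), norm u = n → u * u = 1 → u = 1 := by
  intro n
  induction n using Nat.strong_induction_on with
  | _ n ih =>
    intro u hn hu
    rcases hL : toWord u with _ | ⟨a, M⟩
    · exact toWord_eq_nil_iff.mp hL
    have hredL : Reduced (a :: M) := by rw [← hL]; exact reduced_toWord u
    set L := a :: M with hLdef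
    have hLne : L ≠ [] := by simp [hLdef]
    set b := L.getLast hLne with hbdef
    by_cases hc : b.1 = a.1 ∧ b.2 = !a.2
    · -- cancellation at the wrap: conjugate and recurse
      have hMne : M ≠ [] := by
        rintro rfl
        have : b = a := by simp [hbdef, hLdef]
        rw [this] at hc
        simp at hc
      have hbM : b = M.getLast hMne := by
        simp only [hbdef, hLdef]
        exact List.getLast_cons hMne
      have hLsplit : L = a :: (M.dropLast ++ [b]) := by
        rw [hLdef, hbM, List.dropLast_append_getLast hMne]
      have hb : b = (a.1, !a.2) := Prod.ext_iff.mpr ⟨hc.1, hc.2⟩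
      have hainv : (mk [a] : FreeGroup α)⁻¹ = mk [b] := by
        rw [inv_single, hb]
      have hu' : u = mk [a] * mk M.dropLast * (mk [a])⁻¹ := by
        rw [hainv, mul_mk, mul_mk]
        have e1 : ([a] ++ M.dropLast) ++ [b] = a :: (M.dropLast ++ [b]) := by simp
        rw [e1, ← hLsplit, ← hL, mk_toWord]
      set v := mk (M.dropLast) with hv
      have hv2 : v * v = 1 := by
        have : v = (mk [a])⁻¹ * u * mk [a] := by rw [hu']; group
        rw [this]
        calc (mk [a])⁻¹ * u * mk [a] * ((mk [a])⁻¹ * u * mk [a])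
            = (mk [a])⁻¹ * (u * u) * mk [a] := by group
          _ = 1 := by rw [hu]; group
      have hvn : norm v < n := by
        have h1 : norm v ≤ M.dropLast.length := norm_mk_le
        have h2 : n = M.length + 1 := by rw [← hn, norm_eq_length, hL, hLdef]; simp
        have h3 := List.length_pos_iff.mpr hMne
        rw [List.length_dropLast] at h1
        omega
      have : v = 1 := ih (norm v) hvn v rfl hv2
      rw [hu', this]
      group
    · -- cyclically reduced: u * u has reduced word L ++ L ≠ []
      have hred2 : Reduced (L ++ L) := by
        rw [Reduced, List.Chain', List.isChain_append]
        refine ⟨hredL, hredL, ?_⟩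
        intro x hx y hy
        rw [List.getLast?_eq_getLast hLne] at hx
        rw [hLdef] at hy
        simp only [List.head?_cons, Option.mem_some_iff] at hx hy
        rw [← hx, ← hy] at *
        exact fun h => hc ⟨h.1, h.2⟩
      have : toWord (u * u) = L ++ L := by
        have : u * u = mk (L ++ L) := by rw [← mul_mk, ← hL, mk_toWord]
        rw [this, toWord_mk_of_reduced hred2]
      rw [hu, toWord_one] at this
      exact absurd this.symm (by simp [hLdef])


theorem single_mem (i : α) (s : Bool) :
    (mk [(i, s)] : FreeGroup α) ∈ Subgroup.zpowers (of i) := by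
  cases s
  · have : (mk [(i, false)] : FreeGroup α) = (of i)⁻¹ := by
      rw [show (of i : FreeGroup α) = mk [(i, true)] from rfl, inv_single]
      rfl
    rw [this]
    exact Subgroup.inv_mem _ (Subgroup.mem_zpowers _)
  · exact Subgroup.mem_zpowers _

theorem commute_gen_pow (i : α) (k : ℕ) (hk : k ≠ 0) :
    ∀ (n : ℕ) (g : FreeGroup α), norm g = n →
      Commute g ((of i) ^ k) → g ∈ Subgroup.zpowers (of i) := by
  intro n
  induction n using Nat.strong_induction_on with
  | _ n ih =>
    intro g hn hcomm
    rcases hL : toWord g with _ | ⟨a, M⟩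
    · rw [toWord_eq_nil_iff.mp hL]; exact Subgroup.one_mem _
    set L := a :: M with hLdef
    have hLne : L ≠ [] := by simp [hLdef]
    have hcsingle : ∀ s : Bool, Commute (mk [(i, s)] : FreeGroup α) ((of i) ^ k) := by
      intro s
      obtain ⟨t, ht⟩ := Subgroup.mem_zpowers_iff.mp (single_mem i s)
      rw [← ht, ← zpow_natCast]
      exact Commute.zpow_zpow (Commute.refl _) t k
    by_cases ha : a.1 = i
    · -- peel the first letter of g
      have hpeel : toWord (mk [(a.1, !a.2)] * g) = M := peel hL
      have hgeq : g = mk [a] * (mk [(a.1, !a.2)] * g) := by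
        rw [← mul_assoc, ← inv_single, mul_inv_cancel, one_mul]
      have hmem1 : (mk [a] : FreeGroup α) ∈ Subgroup.zpowers (of i) := by
        have : a = (i, a.2) := Prod.ext_iff.mpr ⟨ha, rfl⟩
        rw [this]; exact single_mem i a.2
      have hcomm' : Commute (mk [(a.1, !a.2)] * g) ((of i) ^ k) := by
        have h1 : Commute (mk [(a.1, !a.2)] : FreeGroup α) ((of i) ^ k) := by
          have : ((a.1, !a.2) : α × Bool) = (i, !a.2) := Prod.ext_iff.mpr ⟨ha, rfl⟩
          rw [this]; exact hcsingle _
        exact h1.mul_left hcomm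
      have hnorm' : norm (mk [(a.1, !a.2)] * g) < n := by
        rw [norm_eq_length, hpeel, ← hn, norm_eq_length, hL, hLdef]
        simp
      have := ih _ hnorm' _ rfl hcomm'
      rw [hgeq]
      exact Subgroup.mul_mem _ hmem1 this
    · rcases hL' : toWord g⁻¹ with _ | ⟨a', M'⟩
      · rw [inv_eq_one.mp (toWord_eq_nil_iff.mp hL')]; exact Subgroup.one_mem _
      have hLinv : toWord g⁻¹ = invRev L := by rw [toWord_inv, hL]
      by_cases ha' : a'.1 = i
      · -- peel the first letter of g⁻¹
        have hpeel : toWord (mk [(a'.1, !a'.2)] * g⁻¹) = M' := peel hL'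
        have hgeq : g⁻¹ = mk [a'] * (mk [(a'.1, !a'.2)] * g⁻¹) := by
          rw [← mul_assoc, ← inv_single, mul_inv_cancel, one_mul]
        have hmem1 : (mk [a'] : FreeGroup α) ∈ Subgroup.zpowers (of i) := by
          have : a' = (i, a'.2) := Prod.ext_iff.mpr ⟨ha', rfl⟩
          rw [this]; exact single_mem i a'.2
        have hcomm' : Commute (mk [(a'.1, !a'.2)] * g⁻¹) ((of i) ^ k) := by
          have h1 : Commute (mk [(a'.1, !a'.2)] : FreeGroup α) ((of i) ^ k) := by
            have : ((a'.1, !a'.2) : α × Bool) = (i, !a'.2) := Prod.ext_iff.mpr ⟨ha', rfl⟩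
            rw [this]; exact hcsingle _
          exact h1.mul_left hcomm.inv_left
        have hnorm' : norm (mk [(a'.1, !a'.2)] * g⁻¹) < n := by
          rw [norm_eq_length, hpeel, ← hn, ← norm_inv_eq, norm_eq_length, hL']
          simp
        have := ih _ hnorm' _ rfl hcomm'
        have : g⁻¹ ∈ Subgroup.zpowers (of i) := by
          rw [hgeq]; exact Subgroup.mul_mem _ hmem1 this
        simpa using Subgroup.inv_mem _ this
      · -- contradiction by length count
        exfalso
        set f : α × Bool → α × Bool := fun x => (x.1, !x.2) with hf
        have hhead : (invRev L).head? = (L.getLast? ).map f := by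
          rw [invRev]
          simp [hf]
        have hb : a' = f (L.getLast hLne) := by
          rw [← hLinv, hL'] at hhead
          rw [List.getLast?_eq_getLast hLne] at hhead
          simpa using hhead
        have hbi : (L.getLast hLne).1 ≠ i := by
          intro h
          apply ha'
          rw [hb, hf, h]
        set W : List (α × Bool) := List.replicate k (i, true) with hW
        have hWne : W ≠ [] := by
          simp [hW, hk]
        have hredW : Reduced W := by
          rw [hW, ← reduce_replicate k ((i, true) : α × Bool)]
          exact reduced_reduce _
        have hxk : (mk W : FreeGroup α) = (of i) ^ k := by
          rw [hW, ← toWord_of_pow i k, mk_toWord]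
        have hredL : Reduced L := by rw [← hL]; exact reduced_toWord g
        have hredLinv : Reduced (invRev L) := by
          rw [← hLinv]; exact reduced_toWord g⁻¹
        have hredfull : Reduced ((L ++ W) ++ invRev L) := by
          rw [Reduced, List.Chain', List.isChain_append, List.isChain_append]
          refine ⟨⟨hredL, hredW, ?_⟩, hredLinv, ?_⟩
          · intro x hx y hy
            rw [List.getLast?_eq_getLast hLne] at hx
            rw [hW] at hy
            rcases k with _ | k
            · exact absurd rfl hk
            · simp only [List.replicate_succ, List.head?_cons, Option.mem_some_iff] at hy
              simp only [Option.mem_some_iff] at hx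
              rw [← hx, ← hy]
              exact fun h => hbi h.1
          · intro x hx y hy
            have : (L ++ W).getLast? = W.getLast? := List.getLast?_append_of_ne_nil _ hWne
            rcases k with _ | k
            · exact absurd rfl hk
            · rw [this, hW, List.getLast?_replicate, if_neg (Nat.succ_ne_zero k)] at hx
              simp only [Option.mem_some_iff] at hx
              rw [← hLinv, hL'] at hy
              simp only [List.head?_cons, Option.mem_some_iff] at hy
              rw [← hx, ← hy]
              exact fun h => ha' h.1.symm
        have hkey : g * (of i) ^ k * g⁻¹ = (of i) ^ k := by
          rw [hcomm.eq]; group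
        have hmkeq : g * (of i) ^ k * g⁻¹ = mk ((L ++ W) ++ invRev L) := by
          rw [← hxk, ← mul_mk, ← mul_mk]
          congr 1
          · congr 1
            rw [← hL, mk_toWord]
          · rw [← hLinv, mk_toWord]
        have hlen := congrArg (fun z => (toWord z).length) (hmkeq.symm.trans hkey)
        simp only [toWord_mk_of_reduced hredfull, ← hxk, toWord_mk_of_reduced hredW] at hlen
        simp only [List.length_append, hLdef] at hlen
        simp only [List.length_cons] at hlen
        omega


theorem commute_gen_zpow (i : α) (k : ℤ) (hk : k ≠ 0) (g : FreeGroup α)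
    (hcomm : Commute g ((of i) ^ k)) : g ∈ Subgroup.zpowers (of i) := by
  have habs : Commute g ((of i) ^ (k.natAbs : ℕ)) := by
    rcases Int.natAbs_eq k with h | h
    · rw [← zpow_natCast, ← h]; exact hcomm
    · have h2 : ((k.natAbs : ℤ)) = -k := by omega
      rw [← zpow_natCast, h2, zpow_neg]
      exact hcomm.inv_right
  exact commute_gen_pow i k.natAbs (by simpa using hk) (norm g) g rfl habs

end Stmt15

/-- Let `a` be a primitive element of a free group `F` and let
`A = ⟨a⟩`.  For every `g ∈ F \ A`, `g` and `g⁻¹` do not lie in the same double coset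
modulo `A`: `g⁻¹ ∉ A g A`; equivalently, `g * a ^ m * g * a ^ n ≠ 1` for all nonzero
integers `m`, `n`. -/
theorem statement15 {α : Type*} (a : FreeGroup α) (hprim : IsPrimitiveElt a)
    (g : FreeGroup α) (hg : g ∉ Subgroup.zpowers a) :
    (¬∃ m n : ℤ, g⁻¹ = a ^ m * g * a ^ n) ∧
    (∀ m n : ℤ, m ≠ 0 → n ≠ 0 → g * a ^ m * g * a ^ n ≠ 1) := by
  classical
  obtain ⟨e, i, hei⟩ := hprim
  have key : ∀ m n : ℤ, g⁻¹ ≠ a ^ m * g * a ^ n := by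
    intro m n heq
    have hxa : e.symm a = FreeGroup.of i := by rw [← hei, MulEquiv.symm_apply_apply]
    have hg'mem : e.symm g ∉ Subgroup.zpowers (FreeGroup.of i) := by
      intro hmem
      obtain ⟨t, ht⟩ := Subgroup.mem_zpowers_iff.mp hmem
      apply hg
      refine Subgroup.mem_zpowers_iff.mpr ⟨t, ?_⟩
      have h4 := congrArg e ht
      rwa [map_zpow, hei, MulEquiv.apply_symm_apply] at h4
    have heq' : (e.symm g)⁻¹ = (FreeGroup.of i) ^ m * (e.symm g) * (FreeGroup.of i) ^ n := by
      have h2 := congrArg e.symm heq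
      rwa [map_inv, map_mul, map_mul, map_zpow, map_zpow, hxa] at h2
    by_cases hmn : m = n
    · subst hmn
      have hsq : ((e.symm g) * (FreeGroup.of i) ^ m) * ((e.symm g) * (FreeGroup.of i) ^ m)
          = 1 := by
        calc ((e.symm g) * (FreeGroup.of i) ^ m) * ((e.symm g) * (FreeGroup.of i) ^ m)
            = (e.symm g) * ((FreeGroup.of i) ^ m * (e.symm g) * (FreeGroup.of i) ^ m) := by
              group
          _ = (e.symm g) * (e.symm g)⁻¹ := by rw [← heq']
          _ = 1 := mul_inv_cancel _
      have h1 : (e.symm g) * (FreeGroup.of i) ^ m = 1 :=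
        Stmt15.sq_eq_one _ _ rfl hsq
      apply hg'mem
      have h5 : e.symm g = ((FreeGroup.of i) ^ m)⁻¹ := mul_eq_one_iff_eq_inv.mp h1
      rw [h5]
      exact Subgroup.inv_mem _ (Subgroup.mem_zpowers_iff.mpr ⟨m, rfl⟩)
    · have key2 : Commute (e.symm g) ((FreeGroup.of i) ^ (m - n)) := by
        have e2 := congrArg Inv.inv heq'
        rw [inv_inv] at e2
        show (e.symm g) * (FreeGroup.of i) ^ (m - n)
            = (FreeGroup.of i) ^ (m - n) * (e.symm g)
        conv_lhs => rw [e2]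
        rw [mul_inv_rev, mul_inv_rev, heq']
        group
      exact hg'mem (Stmt15.commute_gen_zpow i (m - n) (sub_ne_zero_of_ne hmn) _ key2)
  constructor
  · rintro ⟨m, n, h⟩
    exact key m n h
  · intro m n _ _ h1
    have h2 : g * (a ^ m * g * a ^ n) = 1 := by rw [← h1]; group
    exact key m n (inv_eq_of_mul_eq_one_right h2)
end

section
/- Let F be a free group of rank at least 2 with a free basis containing two distinct elements a and b. If g ∈ F is not a power of a and not a power of b, then for every pair of integers n and m, g a^m g b^n ≠ 1. -/
/-!
Put `x = g a^m`; the relation says `x² = b^(-n) a^m`. The reduced word of `b^k a^l` is cyclically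
reduced, and when the reduced word of `x²` is cyclically reduced it is the reduced word of `x`
written twice: writing `x = u r u⁻¹` with `r` cyclically reduced, `x² = u r r u⁻¹` is reduced,
and a nonempty `u` would make its first and last letters mutually inverse. A word `w w` cannot be
`b^k a^l` with `k, l ≠ 0`, since some `a` of the first copy of `w` would precede some `b` of the
second. So `k = 0` or `l = 0`, and `x` is a power of `a` or of `b`; accordingly `g = x a^(-m)` is a
power of `a`, or `m = 0` and `g = x` is a power of `b`.
-/

open List FreeGroup

theorem List.append_self_ne_replicate_append_replicate {β : Type*} {e f : β} (hef : e ≠ f)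
    {K M : ℕ} (hK : K ≠ 0) (hM : M ≠ 0) (r : List β) :
    r ++ r ≠ replicate K e ++ replicate M f := by
  intro h
  -- On the right no `f` precedes an `e`; in `r ++ r` an `f` of one copy precedes an `e` of the
  -- other.
  have hsorted : (r ++ r).Pairwise fun x y => ¬(x = f ∧ y = e) := by
    rw [h]
    simp [pairwise_append, pairwise_replicate, hef, Ne.symm hef]
  have he : e ∈ r ++ r := by simp [h, hK]
  have hf : f ∈ r ++ r := by simp [h, hM]
  rw [mem_append, or_self] at he hf
  exact (pairwise_append.1 hsorted).2.2 f hf e he ⟨rfl, rfl⟩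

namespace FreeGroup

variable {α : Type*}

theorem isCyclicallyReduced_of_forall_mem {L : List (α × Bool)}
    (h : ∀ x ∈ L, ∀ y ∈ L, x.1 = y.1 → x = y) : IsCyclicallyReduced L :=
  ⟨(pairwise_of_forall_mem_list fun x hx y hy hxy => by rw [h x hx y hy hxy]).isChain,
    fun x hx y hy hxy => by rw [h x (mem_of_getLast? hx) y (mem_of_mem_head? hy) hxy]⟩

theorem eq_nil_of_isCyclicallyReduced_append_invRev {u L : List (α × Bool)}
    (h : IsCyclicallyReduced (u ++ L ++ invRev u)) : u = [] := by
  obtain _ | ⟨e, u⟩ := u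
  · rfl
  · have hlast : (e.1, !e.2) ∈ (e :: u ++ L ++ invRev (e :: u)).getLast? := by
      rw [append_assoc, cons_append, getLast?_cons]
      simp [invRev]
    have := h.2 _ hlast e (by simp) rfl
    simp at this

variable [DecidableEq α]

theorem mk_replicate (a : α) (s : Bool) (n : ℕ) :
    mk (replicate n (a, s)) = of a ^ (if s then (n : ℤ) else -n) := by
  cases s
  · have : replicate n (a, false) = invRev (replicate n (a, true)) := by simp [invRev]
    rw [this, ← inv_mk, ← toWord_of_pow, mk_toWord]
    simp
  · rw [← toWord_of_pow, mk_toWord]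
    simp

theorem exists_zpow_eq_mk_replicate (a : α) (k : ℤ) :
    ∃ s, of a ^ k = mk (replicate k.natAbs (a, s)) := by
  rcases k.eq_nat_or_neg with ⟨n, rfl | rfl⟩
  · exact ⟨true, by simp [mk_replicate]⟩
  · exact ⟨false, by simp [mk_replicate]⟩

theorem exists_zpow_eq_of_toWord_eq_replicate {x : FreeGroup α} {a : α} {s : Bool} {n : ℕ}
    (h : x.toWord = replicate n (a, s)) : ∃ j : ℤ, x = of a ^ j :=
  ⟨_, by rw [← mk_toWord (x := x), h, mk_replicate]⟩

open reduceCyclically in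
theorem toWord_pow_of_isCyclicallyReduced {x : FreeGroup α} {n : ℕ} (hn : n ≠ 0)
    (h : IsCyclicallyReduced (x ^ n).toWord) :
    (x ^ n).toWord = (replicate n x.toWord).flatten := by
  have hpow : (x ^ n).toWord = conjugator x.toWord ++
      (replicate n (reduceCyclically x.toWord)).flatten ++ invRev (conjugator x.toWord) := by
    rw [toWord_pow, reduce_flatten_replicate isReduced_toWord, if_neg hn]
  have hconj := eq_nil_of_isCyclicallyReduced_append_invRev (hpow ▸ h)
  have hcyc : reduceCyclically x.toWord = x.toWord := by
    simpa [hconj] using conj_conjugator_reduceCyclically x.toWord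
  simpa [hconj, hcyc] using hpow

theorem sq_eq_zpow_mul_zpow {a b : α} (hab : a ≠ b) {x : FreeGroup α} {k m : ℤ}
    (h : x ^ 2 = of b ^ k * of a ^ m) :
    (k = 0 ∧ ∃ j : ℤ, x = of a ^ j) ∨ (m = 0 ∧ ∃ j : ℤ, x = of b ^ j) := by
  obtain ⟨t, hk⟩ := exists_zpow_eq_mk_replicate b k
  obtain ⟨s, hm⟩ := exists_zpow_eq_mk_replicate a m
  set W := replicate k.natAbs (b, t) ++ replicate m.natAbs (a, s)
  have hW : IsCyclicallyReduced W := isCyclicallyReduced_of_forall_mem <| by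
    simp only [W, mem_append, mem_replicate]
    grind
  have hsq : x.toWord ++ x.toWord = W := by
    have hxW : (x ^ 2).toWord = W := by
      rw [h, hk, hm, mul_mk, toWord_mk, hW.isReduced.reduce_eq]
    simpa [toWord_pow_of_isCyclicallyReduced two_ne_zero (hxW ▸ hW)] using hxW
  by_cases hk0 : k = 0
  · simp only [W, hk0, Int.natAbs_zero, replicate_zero, nil_append, append_eq_replicate_iff] at hsq
    exact .inl ⟨hk0, exists_zpow_eq_of_toWord_eq_replicate hsq.2.1⟩
  by_cases hm0 : m = 0
  · simp only [W, hm0, Int.natAbs_zero, replicate_zero, append_nil, append_eq_replicate_iff] at hsq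
    exact .inr ⟨hm0, exists_zpow_eq_of_toWord_eq_replicate hsq.2.1⟩
  exact absurd hsq <| append_self_ne_replicate_append_replicate (by simp [hab.symm])
    (by omega) (by omega) _

end FreeGroup

/-- Let `F` be a free group with a free basis containing two distinct
elements `a` and `b`.  If `g ∈ F` is not a power of `a` and not a power of `b`, then
`g * a ^ m * g * b ^ n ≠ 1` for all integers `m`, `n`. -/
theorem statement16 {α : Type*} (a b : α) (hab : a ≠ b) (g : FreeGroup α)
    (hga : ∀ k : ℤ, g ≠ FreeGroup.of a ^ k) (hgb : ∀ k : ℤ, g ≠ FreeGroup.of b ^ k) :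
    ∀ m n : ℤ, g * FreeGroup.of a ^ m * g * FreeGroup.of b ^ n ≠ 1 := by
  classical
  intro m n h
  have hsq : (g * of a ^ m) ^ 2 = of b ^ (-n) * of a ^ m :=
    calc (g * of a ^ m) ^ 2 = (g * of a ^ m * g * of b ^ n) * of b ^ (-n) * of a ^ m := by
          rw [sq]; group
      _ = of b ^ (-n) * of a ^ m := by rw [h, one_mul]
  rcases sq_eq_zpow_mul_zpow hab hsq with ⟨-, j, hj⟩ | ⟨rfl, j, hj⟩
  · exact hga (j - m) (by rw [zpow_sub, ← hj]; group)
  · exact hgb j (by simpa using hj)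
end
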